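/- arXiv:2202.01654 — 2 statements merged into one kernel-verified Lean document; each statement's English description precedes it below -/
import Mathlib

section
/- For all 0 < ε < 1/2 and α ∈ (0,1), there exists λ > 0 such that the following holds for every p ∈ (0,1]. Let G = (V₁, V₂; E) be a (λ,p)-upper-uniform bipartite graph with |V₁| = |V₂| and |E| ≥ α·p·|V₁|·|V₂|. Then there exist subsets U₁ ⊆ V₁ and U₂ ⊆ V₂ with |U₁|, |U₂| ≥ λ|V₁| such that the pair (U₁, U₂) is (ε, αp)-lower-regular in G. -/
set_option linter.unusedSectionVars false
set_option linter.unusedVariables false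
set_option maxHeartbeats 1000000

/-- The number of edges of `G` between the (disjoint) sets `A` and `B`, counted as
ordered pairs `(a, b)` with `a ∈ A`, `b ∈ B` adjacent. -/
noncomputable def eCount {V : Type*} (G : SimpleGraph V) (A B : Finset V) : ℕ :=
  Set.ncard {q : V × V | q.1 ∈ A ∧ q.2 ∈ B ∧ G.Adj q.1 q.2}

/-- The pair `(V₁, V₂)` is `(ε, p)`-lower-regular in `G`. -/
def LowerRegularPair {V : Type*} (G : SimpleGraph V) (ε p : ℝ) (V₁ V₂ : Finset V) : Prop :=
  ∀ U₁ ⊆ V₁, ∀ U₂ ⊆ V₂, ε * V₁.card ≤ U₁.card → ε * V₂.card ≤ U₂.card →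
    (1 - ε) * p * U₁.card * U₂.card ≤ (eCount G U₁ U₂ : ℝ)

section lemmas
variable {V : Type*} [DecidableEq V] (G : SimpleGraph V) [DecidableRel G.Adj]

lemma eCount_eq (A B : Finset V) :
    eCount G A B = ((A ×ˢ B).filter (fun q => G.Adj q.1 q.2)).card := by
  rw [eCount, ← Set.ncard_coe_finset]
  congr 1
  ext q
  simp [Finset.mem_filter, Finset.mem_product, and_assoc]

lemma eCount_comm (A B : Finset V) : eCount G A B = eCount G B A := by
  rw [eCount_eq, eCount_eq]
  apply Finset.card_nbij (fun q => (q.2, q.1))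
  · intro q hq
    simp only [Finset.mem_filter, Finset.mem_product, Finset.mem_coe] at *
    exact ⟨⟨hq.1.2, hq.1.1⟩, hq.2.symm⟩
  · intro q hq q' hq' h
    exact Prod.ext (congrArg Prod.snd h) (congrArg Prod.fst h)
  · intro q hq
    simp only [Finset.mem_filter, Finset.mem_product, Finset.coe_filter, Set.mem_setOf_eq] at *
    exact ⟨(q.2, q.1), ⟨⟨hq.1.2, hq.1.1⟩, hq.2.symm⟩, rfl⟩

lemma eCount_sdiff_left {W A : Finset V} (h : W ⊆ A) (B : Finset V) :
    eCount G A B = eCount G W B + eCount G (A \ W) B := by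
  rw [eCount_eq, eCount_eq, eCount_eq, ← Finset.card_union_of_disjoint, ← Finset.filter_union,
    ← Finset.union_product]
  · rw [Finset.union_sdiff_of_subset h]
  · apply Finset.disjoint_filter_filter
    rw [Finset.disjoint_left]
    rintro ⟨x, y⟩ hq hq'
    simp only [Finset.mem_product, Finset.mem_sdiff] at *
    exact hq'.1.2 hq.1

lemma eCount_sdiff_right (A : Finset V) {W B : Finset V} (h : W ⊆ B) :
    eCount G A B = eCount G A W + eCount G A (B \ W) := by
  rw [eCount_comm, eCount_comm G A W, eCount_comm G A (B \ W)]
  exact eCount_sdiff_left G h A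

lemma eCount_singleton (v : V) (B : Finset V) :
    eCount G {v} B = (B.filter (G.Adj v)).card := by
  rw [eCount_eq, Finset.singleton_product, Finset.filter_map, Finset.card_map]
  rfl

lemma eCount_sum (A B : Finset V) : eCount G A B = ∑ v ∈ A, eCount G {v} B := by
  rw [eCount_eq]
  rw [Finset.card_eq_sum_card_fiberwise (f := Prod.fst) (t := A)
    (fun q hq => (Finset.mem_product.1 (Finset.mem_filter.1 hq).1).1)]
  refine Finset.sum_congr rfl fun v hv => ?_
  rw [eCount_singleton]
  apply Finset.card_nbij (fun q => q.2)
  · rintro ⟨a, b⟩ hq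
    simp only [Finset.mem_filter, Finset.mem_product, Finset.mem_coe] at *
    obtain ⟨⟨⟨-, hb⟩, hadj⟩, rfl⟩ := hq
    exact ⟨hb, hadj⟩
  · rintro ⟨a, b⟩ hq ⟨a', b'⟩ hq' h
    simp only [Finset.mem_coe, Finset.mem_filter, Finset.mem_product] at hq hq'
    rw [Prod.ext_iff]
    exact ⟨hq.2.trans hq'.2.symm, h⟩
  · intro b hb
    simp only [Finset.coe_filter, Finset.mem_filter, Finset.mem_product, Set.mem_setOf_eq,
      Finset.mem_coe] at *
    exact ⟨(v, b), ⟨⟨⟨hv, hb.1⟩, hb.2⟩, rfl⟩, rfl⟩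

lemma eCount_pos_iff (A B : Finset V) :
    0 < eCount G A B ↔ ∃ u ∈ A, ∃ v ∈ B, G.Adj u v := by
  rw [eCount_eq, Finset.card_pos]
  constructor
  · rintro ⟨⟨u, v⟩, hq⟩
    simp only [Finset.mem_filter, Finset.mem_product] at hq
    exact ⟨u, hq.1.1, v, hq.1.2, hq.2⟩
  · rintro ⟨u, hu, v, hv, h⟩
    exact ⟨(u, v), Finset.mem_filter.2 ⟨Finset.mem_product.2 ⟨hu, hv⟩, h⟩⟩

lemma eCount_singleton_singleton {u v : V} (h : G.Adj u v) :
    eCount G {u} {v} = 1 := by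
  rw [eCount_singleton]
  rw [Finset.filter_singleton, if_pos h, Finset.card_singleton]

lemma eCount_le (A B : Finset V) : eCount G A B ≤ A.card * B.card := by
  rw [eCount_eq]
  calc _ ≤ (A ×ˢ B).card := Finset.card_filter_le _ _
  _ = _ := Finset.card_product A B

end lemmas

section shrink
variable {V : Type*} [DecidableEq V] (G : SimpleGraph V) [DecidableRel G.Adj]

lemma shrink_aux (θ c : ℝ) (W₂ : Finset V) (hc : 0 ≤ c) :
    ∀ k : ℕ, ∀ W₁ : Finset V, W₁.card ≤ k → c ≤ (W₁.card : ℝ) →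
      (eCount G W₁ W₂ : ℝ) < θ * W₁.card * W₂.card →
      ∃ W₁' ⊆ W₁, c ≤ (W₁'.card : ℝ) ∧ (W₁'.card : ℝ) ≤ c + 1 ∧
        (eCount G W₁' W₂ : ℝ) < θ * W₁'.card * W₂.card := by
  intro k
  induction k with
  | zero =>
    intro W₁ hk hcard hsp
    exact ⟨W₁, Finset.Subset.refl _, hcard, by push_cast [Nat.le_zero.1 hk]; linarith, hsp⟩
  | succ k ih =>
    intro W₁ hk hcard hsp
    by_cases hbig : (W₁.card : ℝ) ≤ c + 1
    · exact ⟨W₁, Finset.Subset.refl _, hcard, hbig, hsp⟩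
    push_neg at hbig
    have hpos : 0 < W₁.card := by
      have : (0:ℝ) < (W₁.card : ℝ) := by linarith
      exact_mod_cast this
    obtain ⟨v, hv, hvmax⟩ := Finset.exists_max_image W₁ (fun w => eCount G {w} W₂)
      (Finset.card_pos.1 hpos)
    have hsum : eCount G W₁ W₂ ≤ W₁.card * eCount G {v} W₂ := by
      rw [eCount_sum, ← smul_eq_mul]
      exact Finset.sum_le_card_nsmul _ _ _ (fun w hw => hvmax w hw)
    have hsplit : eCount G W₁ W₂ = eCount G {v} W₂ + eCount G (W₁ \ {v}) W₂ :=
      eCount_sdiff_left G (Finset.singleton_subset_iff.2 hv) W₂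
    have herase : W₁ \ {v} = W₁.erase v := Finset.sdiff_singleton_eq_erase v W₁
    have hcard' : ((W₁.erase v).card : ℝ) = (W₁.card : ℝ) - 1 := by
      rw [Finset.card_erase_of_mem hv]
      push_cast [Nat.cast_sub hpos]
      ring
    have hklt : (W₁.erase v).card ≤ k := by
      rw [Finset.card_erase_of_mem hv]
      omega
    have hc' : c ≤ ((W₁.erase v).card : ℝ) := by rw [hcard']; linarith
    have hsp' : (eCount G (W₁.erase v) W₂ : ℝ) < θ * (W₁.erase v).card * W₂.card := by
      rw [hcard']
      have h1 : (eCount G (W₁.erase v) W₂ : ℝ) * W₁.card ≤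
          (eCount G W₁ W₂ : ℝ) * ((W₁.card : ℝ) - 1) := by
        have e1 : (eCount G (W₁.erase v) W₂ : ℝ) = (eCount G W₁ W₂ : ℝ) - eCount G {v} W₂ := by
          rw [hsplit, herase]; push_cast; ring
        have e2 : (eCount G W₁ W₂ : ℝ) ≤ (W₁.card : ℝ) * eCount G {v} W₂ := by
          exact_mod_cast hsum
        nlinarith [Nat.cast_nonneg (α := ℝ) (eCount G {v} W₂)]
      have hcpos : (0:ℝ) < (W₁.card : ℝ) := by exact_mod_cast hpos
      have h2 : (eCount G W₁ W₂ : ℝ) * ((W₁.card:ℝ) - 1) <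
          θ * W₁.card * W₂.card * ((W₁.card:ℝ) - 1) := by
        apply mul_lt_mul_of_pos_right hsp
        linarith
      have h3 : (eCount G (W₁.erase v) W₂ : ℝ) * W₁.card <
          θ * ((W₁.card:ℝ) - 1) * W₂.card * W₁.card := by nlinarith
      exact lt_of_mul_lt_mul_right (by linarith) (le_of_lt hcpos)
    obtain ⟨W', hW's, h1, h2, h3⟩ := ih (W₁.erase v) hklt hc' hsp'
    exact ⟨W', hW's.trans (Finset.erase_subset v W₁), h1, h2, h3⟩

lemma shrink_left (θ c : ℝ) (hc : 0 ≤ c) {W₁ : Finset V} (W₂ : Finset V)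
    (hcard : c ≤ (W₁.card : ℝ))
    (hsp : (eCount G W₁ W₂ : ℝ) < θ * W₁.card * W₂.card) :
    ∃ W₁' ⊆ W₁, c ≤ (W₁'.card : ℝ) ∧ (W₁'.card : ℝ) ≤ c + 1 ∧
      (eCount G W₁' W₂ : ℝ) < θ * W₁'.card * W₂.card :=
  shrink_aux G θ c W₂ hc W₁.card W₁ le_rfl hcard hsp

lemma shrink_right (θ c : ℝ) (hc : 0 ≤ c) (W₁ : Finset V) {W₂ : Finset V}
    (hcard : c ≤ (W₂.card : ℝ))
    (hsp : (eCount G W₁ W₂ : ℝ) < θ * W₁.card * W₂.card) :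
    ∃ W₂' ⊆ W₂, c ≤ (W₂'.card : ℝ) ∧ (W₂'.card : ℝ) ≤ c + 1 ∧
      (eCount G W₁ W₂' : ℝ) < θ * W₁.card * W₂'.card := by
  rw [eCount_comm] at hsp
  obtain ⟨W', h0, h1, h2, h3⟩ := shrink_left G θ c hc W₁ hcard
    (by linarith [hsp, (by ring : θ * (W₁.card:ℝ) * W₂.card = θ * W₂.card * W₁.card)])
  exact ⟨W', h0, h1, h2, by
    rw [eCount_comm]
    linarith [h3, (by ring : θ * (W'.card:ℝ) * W₁.card = θ * W₁.card * W'.card)]⟩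

end shrink


lemma main_induction {V : Type*} [DecidableEq V] (G : SimpleGraph V) [DecidableRel G.Adj]
    (ε α p lam μ : ℝ) (K : ℕ) (V₁ V₂ : Finset V)
    (hε : 0 < ε) (hε' : ε < 1/2) (hα : 0 < α) (hα' : α < 1)
    (hp : 0 < p) (hp' : p ≤ 1)
    (hμ : μ = ε ^ K) (hlam : lam = (1 - 2*ε) * μ)
    (hK : 2 / (ε^3 * α) ≤ (K : ℝ))
    (hcard : V₁.card = V₂.card)
    (hUU : ∀ X ⊆ V₁, ∀ Y ⊆ V₂, lam * V₁.card ≤ (X.card : ℝ) → lam * V₂.card ≤ (Y.card : ℝ) →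
      (eCount G X Y : ℝ) ≤ (1 + lam) * X.card * Y.card * p)
    (hn : 1 < lam * V₁.card) :
    ∀ j : ℕ, ∀ A B : Finset V, A ⊆ V₁ → B ⊆ V₂ →
      (μ * V₁.card ≤ ε ^ j * A.card) → (μ * V₁.card ≤ ε ^ j * B.card) →
      ((α + ((K - j : ℕ) : ℝ) * ε^3 * α) * p * A.card * B.card ≤ (eCount G A B : ℝ)) →
      ∃ U₁ ⊆ V₁, ∃ U₂ ⊆ V₂, lam * V₁.card ≤ (U₁.card : ℝ) ∧
        lam * V₁.card ≤ (U₂.card : ℝ) ∧ LowerRegularPair G ε (α * p) U₁ U₂ := by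
  have hε1 : ε < 1 := by linarith
  have hμpos : 0 < μ := hμ ▸ pow_pos hε K
  have hμ1 : μ ≤ 1 := hμ ▸ pow_le_one₀ hε.le hε1.le
  have h2ε : 0 < 1 - 2*ε := by linarith
  have hlampos : 0 < lam := hlam ▸ mul_pos h2ε hμpos
  have hlamμ : lam ≤ μ := by
    rw [hlam]; exact mul_le_of_le_one_left hμpos.le (by linarith)
  have hlam1 : lam < 1 := by
    rw [hlam]
    have h := mul_le_of_le_one_right h2ε.le hμ1
    linarith
  have hnn : (0:ℝ) ≤ (V₁.card : ℝ) := Nat.cast_nonneg _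
  have hμn : 1 < μ * V₁.card :=
    lt_of_lt_of_le hn (mul_le_mul_of_nonneg_right hlamμ hnn)
  intro j
  induction j with
  | zero =>
    intro A B hAV hBV hA hB hdens
    exfalso
    simp only [pow_zero, one_mul, Nat.sub_zero] at hA hB hdens
    have ha1 : (1:ℝ) < A.card := lt_of_lt_of_le hμn hA
    have hb1 : (1:ℝ) < B.card := lt_of_lt_of_le hμn hB
    have hUp := hUU A hAV B hBV
      (le_trans (mul_le_mul_of_nonneg_right hlamμ hnn) hA)
      (by rw [← hcard]; exact le_trans (mul_le_mul_of_nonneg_right hlamμ hnn) hB)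
    have hK2 : (2:ℝ) ≤ (K:ℝ) * (ε^3 * α) := by
      rw [div_le_iff₀ (by positivity)] at hK
      exact hK
    have hco : α + 2 ≤ α + (K:ℝ) * ε^3 * α := by linarith [hK2]
    have hab : (0:ℝ) < p * A.card * B.card := by positivity
    have h2 := mul_le_mul_of_nonneg_right hco hab.le
    have h3 : (1+lam) * (p * A.card * B.card) < (α+2) * (p * A.card * B.card) :=
      mul_lt_mul_of_pos_right (by linarith) hab
    linarith [hdens, hUp, h2, h3]
  | succ j ih =>
    intro A B hAV hBV hA hB hdens
    have hεj : (0:ℝ) < ε ^ j := pow_pos hε j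
    have hεj1 : (0:ℝ) < ε ^ (j+1) := pow_pos hε (j+1)
    have hεj1le : ε ^ (j+1) ≤ 1 := pow_le_one₀ hε.le hε1.le
    have hεjle : ε ^ j ≤ 1 := pow_le_one₀ hε.le hε1.le
    have haμ : μ * V₁.card ≤ (A.card : ℝ) := le_trans hA (by
      have := mul_le_mul_of_nonneg_right hεj1le (Nat.cast_nonneg (α := ℝ) A.card)
      linarith [this])
    have hbμ : μ * V₁.card ≤ (B.card : ℝ) := le_trans hB (by
      have := mul_le_mul_of_nonneg_right hεj1le (Nat.cast_nonneg (α := ℝ) B.card)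
      linarith [this])
    have ha1 : (1:ℝ) < A.card := lt_of_lt_of_le hμn haμ
    have hb1 : (1:ℝ) < B.card := lt_of_lt_of_le hμn hbμ
    have h2εa : 1 < (1 - 2*ε) * A.card := by
      calc (1:ℝ) < lam * V₁.card := hn
      _ = (1-2*ε) * (μ * V₁.card) := by rw [hlam]; ring
      _ ≤ (1-2*ε) * A.card := mul_le_mul_of_nonneg_left haμ h2ε.le
    have h2εb : 1 < (1 - 2*ε) * B.card := by
      calc (1:ℝ) < lam * V₁.card := hn
      _ = (1-2*ε) * (μ * V₁.card) := by rw [hlam]; ring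
      _ ≤ (1-2*ε) * B.card := mul_le_mul_of_nonneg_left hbμ h2ε.le
    by_cases hreg : LowerRegularPair G ε (α * p) A B
    · refine ⟨A, hAV, B, hBV, ?_, ?_, hreg⟩
      · calc lam * V₁.card ≤ μ * V₁.card := mul_le_mul_of_nonneg_right hlamμ hnn
        _ ≤ (A.card : ℝ) := haμ
      · calc lam * V₁.card ≤ μ * V₁.card := mul_le_mul_of_nonneg_right hlamμ hnn
        _ ≤ (B.card : ℝ) := hbμ
    · rw [LowerRegularPair] at hreg
      push_neg at hreg
      obtain ⟨W₁, hW₁A, W₂, hW₂B, hW₁c, hW₂c, hsparse⟩ := hreg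
      obtain ⟨W₁', hW₁'sub, hw1lo, hw1hi, hsp1⟩ :=
        shrink_left G ((1-ε)*(α*p)) (ε * A.card) (by positivity) W₂ hW₁c hsparse
      obtain ⟨W₂', hW₂'sub, hw2lo, hw2hi, hsp2⟩ :=
        shrink_right G ((1-ε)*(α*p)) (ε * B.card) (by positivity) W₁' hW₂c hsp1
      have hW₁'A : W₁' ⊆ A := hW₁'sub.trans hW₁A
      have hW₂'B : W₂' ⊆ B := hW₂'sub.trans hW₂B
      have hw1a : (W₁'.card : ℝ) ≤ A.card := Nat.cast_le.2 (Finset.card_le_card hW₁'A)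
      have hw2b : (W₂'.card : ℝ) ≤ B.card := Nat.cast_le.2 (Finset.card_le_card hW₂'B)
      have hAd : ((A \ W₁').card : ℝ) = (A.card : ℝ) - W₁'.card := by
        rw [Finset.card_sdiff_of_subset hW₁'A, Nat.cast_sub (Finset.card_le_card hW₁'A)]
      have hBd : ((B \ W₂').card : ℝ) = (B.card : ℝ) - W₂'.card := by
        rw [Finset.card_sdiff_of_subset hW₂'B, Nat.cast_sub (Finset.card_le_card hW₂'B)]
      -- complement sides are big
      have hcompA : ε * A.card ≤ ((A \ W₁').card : ℝ) := by
        rw [hAd]; linarith [hw1hi, h2εa]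
      have hcompB : ε * B.card ≤ ((B \ W₂').card : ℝ) := by
        rw [hBd]; linarith [hw2hi, h2εb]
      -- the density coefficients
      have hd_lb : α * p ≤ (α + ((K - (j+1) : ℕ) : ℝ) * ε^3 * α) * p := by
        have h0 : (0:ℝ) ≤ ((K - (j+1) : ℕ) : ℝ) * ε^3 * α := by positivity
        exact mul_le_mul_of_nonneg_right (by linarith) hp.le
      have hdj : (α + ((K - j : ℕ) : ℝ) * ε^3 * α) * p ≤
          (α + ((K - (j+1) : ℕ) : ℝ) * ε^3 * α) * p + ε^3 * α * p := by
        have hnat : (K - j : ℕ) ≤ (K - (j+1) : ℕ) + 1 := by omega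
        have hcast : ((K - j : ℕ) : ℝ) ≤ ((K - (j+1) : ℕ) : ℝ) + 1 := by
          exact_mod_cast hnat
        have := mul_le_mul_of_nonneg_right hcast (by positivity : (0:ℝ) ≤ ε^3 * α * p)
        linarith [this]
      -- size facts for recursion
      have hsizeW1 : μ * V₁.card ≤ ε ^ j * W₁'.card := by
        calc μ * V₁.card ≤ ε ^ (j+1) * A.card := hA
        _ = ε ^ j * (ε * A.card) := by ring
        _ ≤ ε ^ j * W₁'.card := mul_le_mul_of_nonneg_left hw1lo hεj.le
      have hsizeW2 : μ * V₁.card ≤ ε ^ j * W₂'.card := by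
        calc μ * V₁.card ≤ ε ^ (j+1) * B.card := hB
        _ = ε ^ j * (ε * B.card) := by ring
        _ ≤ ε ^ j * W₂'.card := mul_le_mul_of_nonneg_left hw2lo hεj.le
      have hsizeAd : μ * V₁.card ≤ ε ^ j * (A \ W₁').card := by
        calc μ * V₁.card ≤ ε ^ (j+1) * A.card := hA
        _ = ε ^ j * (ε * A.card) := by ring
        _ ≤ ε ^ j * (A \ W₁').card := mul_le_mul_of_nonneg_left hcompA hεj.le
      have hsizeBd : μ * V₁.card ≤ ε ^ j * (B \ W₂').card := by
        calc μ * V₁.card ≤ ε ^ (j+1) * B.card := hB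
        _ = ε ^ j * (ε * B.card) := by ring
        _ ≤ ε ^ j * (B \ W₂').card := mul_le_mul_of_nonneg_left hcompB hεj.le
      by_cases hB1 : ((α + ((K - (j+1) : ℕ) : ℝ) * ε^3 * α) * p + ε^3*α*p) * W₁'.card
          * (B \ W₂').card < (eCount G W₁' (B \ W₂') : ℝ)
      · refine ih W₁' (B \ W₂') (hW₁'A.trans hAV) ((Finset.sdiff_subset).trans hBV)
          hsizeW1 hsizeBd ?_
        refine le_trans ?_ hB1.le
        have hge : (0:ℝ) ≤ (W₁'.card : ℝ) * (B \ W₂').card := by positivity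
        have := mul_le_mul_of_nonneg_right hdj hge
        linarith [this]
      by_cases hB2 : ((α + ((K - (j+1) : ℕ) : ℝ) * ε^3 * α) * p + ε^3*α*p) * (A \ W₁').card
          * W₂'.card < (eCount G (A \ W₁') W₂' : ℝ)
      · refine ih (A \ W₁') W₂' ((Finset.sdiff_subset).trans hAV) (hW₂'B.trans hBV)
          hsizeAd hsizeW2 ?_
        refine le_trans ?_ hB2.le
        have hge : (0:ℝ) ≤ ((A \ W₁').card : ℝ) * W₂'.card := by positivity
        have := mul_le_mul_of_nonneg_right hdj hge
        linarith [this]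
      by_cases hB3 : ((α + ((K - (j+1) : ℕ) : ℝ) * ε^3 * α) * p + ε^3*α*p) * (A \ W₁').card
          * (B \ W₂').card < (eCount G (A \ W₁') (B \ W₂') : ℝ)
      · refine ih (A \ W₁') (B \ W₂') ((Finset.sdiff_subset).trans hAV)
          ((Finset.sdiff_subset).trans hBV) hsizeAd hsizeBd ?_
        refine le_trans ?_ hB3.le
        have hge : (0:ℝ) ≤ ((A \ W₁').card : ℝ) * (B \ W₂').card := by positivity
        have := mul_le_mul_of_nonneg_right hdj hge
        linarith [this]
      -- contradiction case
      exfalso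
      push_neg at hB1 hB2 hB3
      have hsplit1 : eCount G A B = eCount G W₁' B + eCount G (A \ W₁') B :=
        eCount_sdiff_left G hW₁'A B
      have hsplit2 : eCount G W₁' B = eCount G W₁' W₂' + eCount G W₁' (B \ W₂') :=
        eCount_sdiff_right G W₁' hW₂'B
      have hsplit3 : eCount G (A \ W₁') B =
          eCount G (A \ W₁') W₂' + eCount G (A \ W₁') (B \ W₂') :=
        eCount_sdiff_right G (A \ W₁') hW₂'B
      have htot : (eCount G A B : ℝ) = (eCount G W₁' W₂' : ℝ) + eCount G W₁' (B \ W₂')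
          + eCount G (A \ W₁') W₂' + eCount G (A \ W₁') (B \ W₂') := by
        rw [hsplit1, hsplit2, hsplit3]; push_cast; ring
      rw [hAd] at hB2 hB3
      rw [hBd] at hB1 hB3
      set d : ℝ := (α + ((K - (j+1) : ℕ) : ℝ) * ε^3 * α) * p with hd_def
      have hm0 : d * A.card * B.card < (1-ε)*(α*p) * W₁'.card * W₂'.card
          + (d + ε^3*α*p) * ((A.card : ℝ) * B.card - (W₁'.card : ℝ) * W₂'.card) := by
        linarith [hdens, htot, hsp2, hB1, hB2, hB3]
      have hm1 : (ε*(α*p) + ε^3*α*p) * ((W₁'.card:ℝ) * W₂'.card) ≤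
          (d + ε^3*α*p - (1-ε)*(α*p)) * ((W₁'.card:ℝ) * W₂'.card) := by
        apply mul_le_mul_of_nonneg_right _ (by positivity)
        linarith [hd_lb]
      have hm2 : (ε*(α*p) + ε^3*α*p) * ((ε * A.card) * (ε * B.card)) ≤
          (ε*(α*p) + ε^3*α*p) * ((W₁'.card:ℝ) * W₂'.card) := by
        apply mul_le_mul_of_nonneg_left _ (by positivity)
        apply mul_le_mul hw1lo hw2lo (by positivity)
        exact le_trans (by positivity) hw1lo
      have hm3 : (0:ℝ) < ε^3*α*p * ε^2 * (A.card * B.card) := by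
        have := ha1; have := hb1; positivity
      linarith [hm0, hm1, hm2, hm3]


/-- For all `0 < ε < 1/2` and `α ∈ (0,1)` there is `λ > 0` such that: for every
`p ∈ (0,1]`, every `(λ, p)`-upper-uniform bipartite graph `(V₁, V₂)` with
`|V₁| = |V₂|` and at least `α p |V₁||V₂|` edges contains subsets `U₁ ⊆ V₁`,
`U₂ ⊆ V₂` with `|U₁|, |U₂| ≥ λ|V₁|` such that `(U₁, U₂)` is
`(ε, αp)`-lower-regular. -/
theorem lowerRegular_pair_of_upper_uniform (ε α : ℝ) (hε : 0 < ε) (hε' : ε < 1 / 2)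
    (hα : 0 < α) (hα' : α < 1) :
    ∃ lam : ℝ, 0 < lam ∧ ∀ p : ℝ, 0 < p → p ≤ 1 →
      ∀ {V : Type} (G : SimpleGraph V) (V₁ V₂ : Finset V), Disjoint V₁ V₂ →
        V₁.card = V₂.card →
        (∀ X ⊆ V₁, ∀ Y ⊆ V₂, lam * V₁.card ≤ X.card → lam * V₂.card ≤ Y.card →
          (eCount G X Y : ℝ) ≤ (1 + lam) * X.card * Y.card * p) →
        α * p * V₁.card * V₂.card ≤ (eCount G V₁ V₂ : ℝ) →
        ∃ U₁ ⊆ V₁, ∃ U₂ ⊆ V₂, lam * V₁.card ≤ (U₁.card : ℝ) ∧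
          lam * V₁.card ≤ (U₂.card : ℝ) ∧
          LowerRegularPair G ε (α * p) U₁ U₂ := by
  classical
  set K : ℕ := ⌈2 / (ε^3 * α)⌉₊ with hK_def
  refine ⟨(1 - 2*ε) * ε ^ K, by nlinarith [pow_pos hε K], ?_⟩
  intro p hp hp' V G V₁ V₂ hdisj hcard hUU hdens
  set lam : ℝ := (1 - 2*ε) * ε ^ K with hlam_def
  by_cases hsmall : lam * V₁.card ≤ 1
  · -- small case : find a single edge (or the empty pair)
    by_cases hn0 : V₁.card = 0
    · refine ⟨∅, Finset.empty_subset _, ∅, Finset.empty_subset _, ?_, ?_, ?_⟩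
      · simp [hn0]
      · simp [hn0]
      · intro U₁ hU₁ U₂ hU₂ h1 h2
        rw [Finset.subset_empty] at hU₁ hU₂
        subst hU₁; subst hU₂
        simp only [Finset.card_empty, Nat.cast_zero]
        have : (0:ℝ) ≤ (eCount G (∅ : Finset V) ∅ : ℝ) := Nat.cast_nonneg _
        linarith
    · have hn1 : (1:ℝ) ≤ V₁.card := by
        have : 0 < V₁.card := Nat.pos_of_ne_zero hn0
        exact_mod_cast this
      have hepos : (0:ℝ) < (eCount G V₁ V₂ : ℝ) := by
        refine lt_of_lt_of_le ?_ hdens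
        have hn2 : (1:ℝ) ≤ V₂.card := by rw [← hcard]; exact hn1
        have h1 : (0:ℝ) < V₁.card := lt_of_lt_of_le zero_lt_one hn1
        have h2 : (0:ℝ) < V₂.card := lt_of_lt_of_le zero_lt_one hn2
        exact mul_pos (mul_pos (mul_pos hα hp) h1) h2
      have : 0 < eCount G V₁ V₂ := by exact_mod_cast hepos
      obtain ⟨u, hu, v, hv, hadj⟩ := (eCount_pos_iff G V₁ V₂).1 this
      refine ⟨{u}, Finset.singleton_subset_iff.2 hu, {v}, Finset.singleton_subset_iff.2 hv,
        ?_, ?_, ?_⟩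
      · simpa using hsmall
      · simpa using hsmall
      · intro U₁ hU₁ U₂ hU₂ h1 h2
        rcases Finset.subset_singleton_iff.1 hU₁ with rfl | rfl
        · exfalso
          simp only [Finset.card_empty, Nat.cast_zero, Finset.card_singleton,
            Nat.cast_one, mul_one] at h1
          linarith
        rcases Finset.subset_singleton_iff.1 hU₂ with rfl | rfl
        · exfalso
          simp only [Finset.card_empty, Nat.cast_zero, Finset.card_singleton,
            Nat.cast_one, mul_one] at h2
          linarith
        rw [eCount_singleton_singleton G hadj]
        simp only [Finset.card_singleton, Nat.cast_one, mul_one]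
        have hap : α * p ≤ 1 := mul_le_one₀ hα'.le hp.le hp'
        have h0 : (0:ℝ) ≤ α * p := mul_nonneg hα.le hp.le
        have := mul_le_of_le_one_left h0 (by linarith : (1:ℝ) - ε ≤ 1)
        linarith
  · push_neg at hsmall
    have hmain := main_induction G ε α p lam (ε ^ K) K V₁ V₂ hε hε' hα hα' hp hp'
      rfl rfl (Nat.le_ceil _) hcard hUU hsmall K V₁ V₂
      (Finset.Subset.refl _) (Finset.Subset.refl _) le_rfl (by rw [hcard]) ?_
    · exact hmain
    · rw [Nat.sub_self]
      push_cast
      linarith [hdens]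
end

section
/- Let s, m ∈ ℕ with m ≥ 2, let p ∈ (0,1], and let λ > 0, 0 < α ≤ 1 and ε > 0 satisfy ε ≤ α/256, α²sp² ≥ 16 and εαsp² ≥ 800/λ². Let Γ be a graph and G a subgraph of Γ, and let U₁, …, U_m be pairwise disjoint sets of vertices, each of order s, with indices taken cyclically modulo m. Assume that for every j ∈ [m] and all X ⊆ U_j, Y ⊆ U_{j+1} with |X||Y|p ≥ 100s/λ², one has e_Γ(X, Y) ≤ (1+λ)|X||Y|p. Suppose that for every j ∈ [m] there are sets S_j ⊆ U_j of order ⌈αsp/4⌉ and B_j ⊆ U_j of order |B_j| ≤ εs such that both (S_j, S_{j+1}) and (S_j, U_{j+1} \ B_{j+1}) are (ε, αp)-lower-regular in G. Then, for every choice of sets Q_j ⊆ U_j with |Q_j| ≤ 2εs for each j ∈ [m], there exists a path v₁, v₂, …, v_m in G with v_j ∈ S_j for every j ∈ [m] (v_j adjacent to v_{j+1} in G for each 1 ≤ j < m) such that every v_j has at least αsp/4 neighbours in U_{j+1} \ Q_{j+1} in the graph G. -/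
lemma eCount_eq_sum {V : Type*} [DecidableEq V] (G : SimpleGraph V) [DecidableRel G.Adj]
    (A B : Finset V) :
    eCount G A B = ∑ a ∈ A, (B.filter fun b => G.Adj a b).card := by
  have h : {q : V × V | q.1 ∈ A ∧ q.2 ∈ B ∧ G.Adj q.1 q.2}
      = ↑((A ×ˢ B).filter fun q => G.Adj q.1 q.2) := by
    ext q
    simp [Finset.mem_product, and_assoc]
  rw [eCount, h, Set.ncard_coe_finset,
    Finset.card_eq_sum_card_fiberwise (f := Prod.fst) (t := A)
      (fun x hx => by simp only [Finset.mem_coe, Finset.mem_filter, Finset.mem_product] at hx; exact hx.1.1)]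
  refine Finset.sum_congr rfl fun a ha => ?_
  refine Finset.card_bij (fun q _ => q.2) ?_ ?_ ?_
  · intro q hq
    simp only [Finset.mem_filter, Finset.mem_product] at hq ⊢
    exact ⟨hq.1.1.2, hq.2 ▸ hq.1.2⟩
  · intro q1 h1 q2 h2 h
    simp only [Finset.mem_filter] at h1 h2
    exact Prod.ext (h1.2.trans h2.2.symm) h
  · intro b hb
    simp only [Finset.mem_filter] at hb
    exact ⟨(a, b), by simp [Finset.mem_filter, Finset.mem_product, ha, hb.1, hb.2], rfl⟩

set_option maxHeartbeats 1000000 in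
/-- The embedding invariant: given cyclically indexed disjoint sets `U_j` of order `s`
with upper-uniform `Γ`-edge counts between consecutive ones, candidate sets
`S_j ⊆ U_j` of order `⌈αsp/4⌉` and small bad sets `B_j ⊆ U_j` with `(S_j, S_{j+1})`
and `(S_j, U_{j+1} \ B_{j+1})` lower-regular in `G ⊆ Γ`, for any sets `Q_j ⊆ U_j` of
order at most `2εs` there is a path `v₁, …, v_m` in `G` with `v_j ∈ S_j` such that
each `v_j` has at least `αsp/4` `G`-neighbours in `U_{j+1} \ Q_{j+1}`. -/
theorem embedding_invariant {V : Type*} [DecidableEq V] (s m : ℕ) (hm : 2 ≤ m) (p : ℝ)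
    (hp : 0 < p) (hp' : p ≤ 1) (lam α ε : ℝ) (hlam : 0 < lam) (hα : 0 < α)
    (hα' : α ≤ 1) (hε : 0 < ε) (hεα : ε ≤ α / 256)
    (h1 : (16 : ℝ) ≤ α ^ 2 * s * p ^ 2) (h2 : 800 / lam ^ 2 ≤ ε * α * s * p ^ 2)
    (Γ G : SimpleGraph V) (hGΓ : G ≤ Γ)
    (U : ZMod m → Finset V) (hUdisj : Pairwise fun i j => Disjoint (U i) (U j))
    (hUcard : ∀ j, (U j).card = s)
    (hupper : ∀ j : ZMod m, ∀ X ⊆ U j, ∀ Y ⊆ U (j + 1),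
      (100 : ℝ) * s / lam ^ 2 ≤ X.card * Y.card * p →
      (eCount Γ X Y : ℝ) ≤ (1 + lam) * X.card * Y.card * p)
    (S B : ZMod m → Finset V)
    (hS : ∀ j, S j ⊆ U j) (hScard : ∀ j, (S j).card = ⌈α * s * p / 4⌉₊)
    (hB : ∀ j, B j ⊆ U j) (hBcard : ∀ j, ((B j).card : ℝ) ≤ ε * s)
    (hregS : ∀ j, LowerRegularPair G ε (α * p) (S j) (S (j + 1)))
    (hregU : ∀ j, LowerRegularPair G ε (α * p) (S j) (U (j + 1) \ B (j + 1))) :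
    ∀ Q : ZMod m → Finset V, (∀ j, Q j ⊆ U j ∧ ((Q j).card : ℝ) ≤ 2 * ε * s) →
      ∃ v : ℕ → V,
        (∀ j : ℕ, 1 ≤ j → j ≤ m → v j ∈ S (j : ZMod m)) ∧
        (∀ j : ℕ, 1 ≤ j → j < m → G.Adj (v j) (v (j + 1))) ∧
        (∀ j : ℕ, 1 ≤ j → j ≤ m →
          α * s * p / 4 ≤
            ({u : V | u ∈ U ((j : ZMod m) + 1) \ Q ((j : ZMod m) + 1) ∧
              G.Adj (v j) u}.ncard : ℝ)) := by
  classical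
  intro Q hQ
  set N : ℕ := ⌈α * s * p / 4⌉₊ with hNdef
  -- Basic numeric facts
  have hαp : 0 < α * p := mul_pos hα hp
  have hαp1 : α * p ≤ 1 := by nlinarith
  have hap2 : (α * p) ^ 2 ≤ 1 := by nlinarith
  have hsR : (16 : ℝ) ≤ s := by
    nlinarith [mul_nonneg (Nat.cast_nonneg s : (0:ℝ) ≤ s) (sub_nonneg.2 hap2)]
  have hspos : (0 : ℝ) < s := by linarith
  have hasp : (16 : ℝ) ≤ α * s * p := by
    nlinarith [mul_nonneg (le_of_lt (mul_pos (mul_pos hα hspos) hp)) (sub_nonneg.2 hαp1)]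
  have hNge : α * s * p / 4 ≤ (N : ℝ) := Nat.le_ceil _
  have hN4 : (4 : ℝ) ≤ N := by linarith
  have hNpos : (0 : ℝ) < N := by linarith
  have hε1 : ε ≤ 1 / 256 := by linarith
  -- Good sets T j
  obtain ⟨T, hTmem⟩ : ∃ T : ZMod m → Finset V, ∀ j v, v ∈ T j ↔
      (v ∈ S j ∧ α * s * p / 4 ≤
        (((U (j + 1) \ Q (j + 1)).filter fun u => G.Adj v u).card : ℝ)) :=
    ⟨fun j => (S j).filter fun v => α * s * p / 4 ≤
        (((U (j + 1) \ Q (j + 1)).filter fun u => G.Adj v u).card : ℝ),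
      fun j v => Finset.mem_filter⟩
  have hTS : ∀ j, T j ⊆ S j := fun j v hv => ((hTmem j v).1 hv).1
  -- No-edge sets are small
  have hZ : ∀ j : ZMod m, ∀ A' ⊆ S (j + 1), ε * N ≤ (A'.card : ℝ) →
      ∀ D ⊆ S j, (∀ v ∈ D, ∀ u ∈ A', ¬ G.Adj v u) → ((D.card : ℝ)) < ε * N := by
    intro j A' hA' hA'card D hD hno
    by_contra hcon
    push_neg at hcon
    have hreg := hregS j D hD A' hA' (by rw [hScard]; exact hcon)
      (by rw [hScard]; exact hA'card)
    have hzero : eCount G D A' = 0 := by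
      rw [eCount_eq_sum]
      refine Finset.sum_eq_zero fun v hv => ?_
      rw [Finset.card_eq_zero, Finset.filter_eq_empty_iff]
      exact fun u hu => hno v hv u hu
    rw [hzero] at hreg
    push_cast at hreg
    have hDpos : (0 : ℝ) < D.card := lt_of_lt_of_le (by positivity) hcon
    have hApos : (0 : ℝ) < A'.card := lt_of_lt_of_le (by positivity) hA'card
    have h12 := mul_pos (mul_pos (mul_pos (show (0:ℝ) < 1 - ε by linarith) hαp) hDpos) hApos
    linarith
  -- Bad vertices are few
  have hT : ∀ j : ZMod m, ((S j \ T j).card : ℝ) < ε * N := by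
    intro j
    by_contra hcon
    push_neg at hcon
    set D := S j \ T j with hD
    set W := (U (j + 1) \ B (j + 1)) \ Q (j + 1) with hW
    have hWsub : W ⊆ U (j + 1) \ B (j + 1) := Finset.sdiff_subset
    have hWUQ : W ⊆ U (j + 1) \ Q (j + 1) :=
      Finset.sdiff_subset_sdiff Finset.sdiff_subset (le_refl _)
    have hUB : ((U (j + 1) \ B (j + 1)).card : ℝ) = s - (B (j + 1)).card := by
      rw [Finset.card_sdiff_of_subset (hB _), Nat.cast_sub (Finset.card_le_card (hB _)), hUcard]
    have hUBge : (s : ℝ) - ε * s ≤ ((U (j + 1) \ B (j + 1)).card : ℝ) := by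
      rw [hUB]; linarith [hBcard (j + 1)]
    have hUBle : ((U (j + 1) \ B (j + 1)).card : ℝ) ≤ s := by
      rw [hUB]; linarith [(Nat.cast_nonneg (B (j + 1)).card : (0:ℝ) ≤ (B (j + 1)).card)]
    have hWge : (s : ℝ) - 3 * (ε * s) ≤ (W.card : ℝ) := by
      have h3 : (U (j + 1) \ B (j + 1)).card ≤ W.card + (Q (j + 1)).card :=
        Finset.card_le_card_sdiff_add_card
      have h4 := (hQ (j + 1)).2
      have h3' : ((U (j + 1) \ B (j + 1)).card : ℝ) ≤ (W.card : ℝ) + ((Q (j + 1)).card : ℝ) := by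
        exact_mod_cast h3
      linarith
    have hεW : ε * ((U (j + 1) \ B (j + 1)).card : ℝ) ≤ (W.card : ℝ) := by
      nlinarith [mul_le_mul_of_nonneg_left hUBle hε.le, hspos]
    have hεD : ε * ((S j).card : ℝ) ≤ (D.card : ℝ) := by rw [hScard]; exact hcon
    have hreg := hregU j D Finset.sdiff_subset W hWsub hεD hεW
    have hDpos : (0 : ℝ) < D.card := lt_of_lt_of_le (by positivity) hcon
    have hDne : D.Nonempty := Finset.card_pos.1 (by exact_mod_cast hDpos)
    have hup : (eCount G D W : ℝ) < (D.card : ℝ) * (α * s * p / 4) := by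
      rw [eCount_eq_sum]
      push_cast
      calc ∑ v ∈ D, ((W.filter fun u => G.Adj v u).card : ℝ)
          < ∑ _v ∈ D, (α * s * p / 4) := by
            apply Finset.sum_lt_sum_of_nonempty hDne
            intro v hv
            have hv' := Finset.mem_sdiff.1 hv
            have hnot : ¬ (α * s * p / 4 ≤
                (((U (j + 1) \ Q (j + 1)).filter fun u => G.Adj v u).card : ℝ)) :=
              fun hc => hv'.2 ((hTmem j v).2 ⟨hv'.1, hc⟩)
            push_neg at hnot
            refine lt_of_le_of_lt ?_ hnot
            exact_mod_cast Finset.card_le_card (Finset.filter_subset_filter _ hWUQ)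
        _ = (D.card : ℝ) * (α * s * p / 4) := by
            rw [Finset.sum_const, nsmul_eq_mul]
    have hkey : α * s * p / 4 ≤ (1 - ε) * (α * p) * (W.card : ℝ) := by
      have hWge' : (1 - 3 * ε) * s ≤ (W.card : ℝ) := by linarith
      have h13 : (0:ℝ) ≤ (1 - ε) * (α * p) := by nlinarith
      have h14 := mul_le_mul_of_nonneg_left hWge' h13
      have h15 : (0:ℝ) ≤ (α * p * s) * (3/4 - 4 * ε + 3 * ε ^ 2) := by
        have : (0:ℝ) ≤ 3/4 - 4 * ε + 3 * ε ^ 2 := by nlinarith [sq_nonneg ε]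
        have haps : (0:ℝ) ≤ α * p * s := by positivity
        exact mul_nonneg haps this
      nlinarith [h14, h15]
    nlinarith [hreg, hup, mul_le_mul_of_nonneg_left hkey hDpos.le]
  have hTcard : ∀ j : ZMod m, (1 - ε) * N < ((T j).card : ℝ) := by
    intro j
    have h := hT j
    have hc : (S j).card ≤ (S j \ T j).card + (T j).card :=
      Finset.card_le_card_sdiff_add_card
    rw [hScard] at hc
    have hc' : (N : ℝ) ≤ ((S j \ T j).card : ℝ) + ((T j).card : ℝ) := by exact_mod_cast hc
    linarith
  -- Candidate sets by downward recursion
  obtain ⟨F, hF0, hFs⟩ : ∃ F : ℕ → Finset V, F 0 = T ((m : ℕ) : ZMod m) ∧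
      ∀ i, F (i + 1) = (T (((m - (i + 1) : ℕ)) : ZMod m)).filter
        fun v => ∃ u ∈ F i, G.Adj v u :=
    ⟨Nat.rec (T ((m : ℕ) : ZMod m)) (fun i ih =>
      (T (((m - (i + 1) : ℕ)) : ZMod m)).filter fun v => ∃ u ∈ ih, G.Adj v u),
      rfl, fun _ => rfl⟩
  have hFinv : ∀ i, i ≤ m - 1 →
      F i ⊆ T (((m - i : ℕ)) : ZMod m) ∧ (1 - 2 * ε) * N ≤ ((F i).card : ℝ) := by
    intro i
    induction i with
    | zero =>
      intro _
      rw [hF0, Nat.sub_zero]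
      exact ⟨le_refl _, by nlinarith [hTcard ((m : ℕ) : ZMod m), mul_nonneg hε.le hNpos.le]⟩
    | succ i ih =>
      intro hi1
      have hii : i ≤ m - 1 := le_trans (Nat.le_succ i) hi1
      obtain ⟨ihsub, ihcard⟩ := ih hii
      have hidx : ((m - (i + 1) : ℕ) : ZMod m) + 1 = ((m - i : ℕ) : ZMod m) := by
        have h5 : m - (i + 1) + 1 = m - i := by omega
        rw [← h5]
        push_cast
        ring
      have hsubT : F (i + 1) ⊆ T (((m - (i + 1) : ℕ)) : ZMod m) := by
        rw [hFs]; exact Finset.filter_subset _ _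
      refine ⟨hsubT, ?_⟩
      have hA'sub : F i ⊆ S ((((m - (i + 1) : ℕ)) : ZMod m) + 1) := by
        rw [hidx]; exact ihsub.trans (hTS _)
      have hA'card : ε * N ≤ ((F i).card : ℝ) := le_trans (by nlinarith) ihcard
      have hDsub : T (((m - (i + 1) : ℕ)) : ZMod m) \ F (i + 1) ⊆
          S (((m - (i + 1) : ℕ)) : ZMod m) := Finset.sdiff_subset.trans (hTS _)
      have hno : ∀ v ∈ T (((m - (i + 1) : ℕ)) : ZMod m) \ F (i + 1),
          ∀ u ∈ F i, ¬ G.Adj v u := by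
        intro v hv u hu hadj
        have hv' := Finset.mem_sdiff.1 hv
        exact hv'.2 (by rw [hFs]; exact Finset.mem_filter.2 ⟨hv'.1, ⟨u, hu, hadj⟩⟩)
      have hD := hZ _ (F i) hA'sub hA'card _ hDsub hno
      have hc : (T (((m - (i + 1) : ℕ)) : ZMod m)).card ≤
          (T (((m - (i + 1) : ℕ)) : ZMod m) \ F (i + 1)).card + (F (i + 1)).card :=
        Finset.card_le_card_sdiff_add_card
      have htc := hTcard (((m - (i + 1) : ℕ)) : ZMod m)
      have hc' : ((T (((m - (i + 1) : ℕ)) : ZMod m)).card : ℝ) ≤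
          ((T (((m - (i + 1) : ℕ)) : ZMod m) \ F (i + 1)).card : ℝ) + ((F (i + 1)).card : ℝ) := by
        exact_mod_cast hc
      linarith
  have hFne : (F (m - 1)).Nonempty := by
    rw [← Finset.card_pos]
    have := (hFinv (m - 1) le_rfl).2
    have h6 : (0 : ℝ) < (F (m - 1)).card := by nlinarith
    exact_mod_cast h6
  obtain ⟨c0, hc0⟩ := hFne
  -- Greedy vertex choices
  obtain ⟨g, hg0, hgs⟩ : ∃ g : ℕ → V, g 0 = c0 ∧
      ∀ k, g (k + 1) = if h : ∃ u ∈ F (m - 2 - k), G.Adj (g k) u then h.choose else g k :=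
    ⟨Nat.rec c0 (fun k ih => if h : ∃ u ∈ F (m - 2 - k), G.Adj ih u then h.choose else ih),
      rfl, fun _ => rfl⟩
  have hg : ∀ k, k ≤ m - 1 → g k ∈ F (m - 1 - k) := by
    intro k
    induction k with
    | zero => intro _; rw [hg0, Nat.sub_zero]; exact hc0
    | succ k ih =>
      intro hk
      have hmem := ih (le_trans (Nat.le_succ k) hk)
      have hidx : m - 1 - k = (m - 2 - k) + 1 := by omega
      rw [hidx, hFs] at hmem
      have hex : ∃ u ∈ F (m - 2 - k), G.Adj (g k) u := (Finset.mem_filter.1 hmem).2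
      rw [hgs k, dif_pos hex]
      have h7 := hex.choose_spec
      have hidx2 : m - 1 - (k + 1) = m - 2 - k := by omega
      rw [hidx2]
      exact h7.1
  have hadj : ∀ k, k + 1 ≤ m - 1 → G.Adj (g k) (g (k + 1)) := by
    intro k hk
    have hmem := hg k (le_trans (Nat.le_succ k) hk)
    have hidx : m - 1 - k = (m - 2 - k) + 1 := by omega
    rw [hidx, hFs] at hmem
    have hex : ∃ u ∈ F (m - 2 - k), G.Adj (g k) u := (Finset.mem_filter.1 hmem).2
    rw [hgs k, dif_pos hex]
    exact hex.choose_spec.2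
  have hmemT : ∀ j : ℕ, 1 ≤ j → j ≤ m → g (j - 1) ∈ T ((j : ℕ) : ZMod m) := by
    intro j hj1 hjm
    have h8 := hg (j - 1) (by omega)
    have hidx : m - 1 - (j - 1) = m - j := by omega
    rw [hidx] at h8
    have hsub := (hFinv (m - j) (by omega)).1
    have h9 := hsub h8
    have hmm : m - (m - j) = j := by omega
    rwa [hmm] at h9
  refine ⟨fun j => g (j - 1), ?_, ?_, ?_⟩
  · intro j hj1 hjm
    beta_reduce
    exact hTS _ (hmemT j hj1 hjm)
  · intro j hj1 hjm
    beta_reduce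
    have h10 := hadj (j - 1) (by omega)
    have hidx : j - 1 + 1 = j := by omega
    rw [hidx] at h10
    have hidx2 : j + 1 - 1 = (j - 1) + 1 := by omega
    rw [hidx2, hidx]
    exact h10
  · intro j hj1 hjm
    beta_reduce
    have h11 := ((hTmem _ _).1 (hmemT j hj1 hjm)).2
    have hset : {u : V | u ∈ U ((j : ZMod m) + 1) \ Q ((j : ZMod m) + 1) ∧
        G.Adj (g (j - 1)) u}
        = ↑((U ((j : ZMod m) + 1) \ Q ((j : ZMod m) + 1)).filter
          fun u => G.Adj (g (j - 1)) u) := by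
      ext u
      simp [Finset.mem_filter]
    rw [hset, Set.ncard_coe_finset]
    exact h11
end
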